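/- arXiv:2602.17178 — 2 statements merged into one kernel-verified Lean document; each statement's English description precedes it below -/
import Mathlib

section
/- (i) For every ε ∈ (0, 2−b) there exists r_ε > 0 with f(r)² ≤ H(r) ≤ f(r)^{2−b−ε} for all r > r_ε. (ii) 1 ≤ liminf_{u→∞} g(γ(u))/g(α(u)) ≤ limsup_{u→∞} g(γ(u))/g(α(u)) ≤ (2/(2−b))^ω. (iii) For every δ > 0, lim_{u→∞} g(γ(u))² e^{K̃ t g(γ(u))} / u^δ = 0. -/
/-!
Taking logarithms, `log H(r) = 2 log f(r) + ((d-1) log r + log η(r)) + K̃ t g(r)`, and by the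
definition of `b` and condition (D) the last two terms are `(b + o(1)) |log f(r)|`; this is (i).
At `r = γ(u)`, (i) squeezes `f(γ(u))` between `(κ̃/u)^{1/(2-b-ε)}` and `(κ̃/u)^{1/2}`, that is
between `c s^λ` and `c' s` with `s = (κ/u)^{1/2}` and `λ = 2/(2-b-ε)`. Since `α(u) = f⁻¹(s)` and
`g ∘ f⁻¹` is decreasing, `g(γ(u))/g(α(u))` lies between two ratios controlled by the rate
condition (with exponents `1` and `λ`), which gives (ii). The same squeeze gives
`|log f(γ(u))| = O(log u)`, so by (D) `g(γ(u)) = o(log u)`, hence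
`g(γ(u))² e^{K̃ t g(γ(u))} ≤ u^{δ/2 + o(1)}`, which gives (iii).
-/

open Filter Topology Set Real Asymptotics

lemma sq_mul_le_rpow_of_log_le {x P β : ℝ} (hx : 0 < x) (hP : 0 < P)
    (h : log P ≤ β * -log x) : x ^ 2 * P ≤ x ^ (2 - β) := by
  rw [← exp_log (mul_pos (pow_pos hx 2) hP), rpow_def_of_pos hx, exp_le_exp,
    log_mul (pow_pos hx 2).ne' hP.ne', log_pow]
  push_cast
  linarith

lemma exists_pos_forall_gt_of_eventually {p : ℝ → Prop} (h : ∀ᶠ r in atTop, p r) :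
    ∃ R > 0, ∀ r > R, p r := by
  obtain ⟨a, ha⟩ := eventually_atTop.1 h
  exact ⟨max a 1, by positivity, fun r hr => ha r ((le_max_left a 1).trans hr.le)⟩

lemma le_liminf_and_limsup_le {α : Type*} {l : Filter α} [l.NeBot] {ρ : α → ℝ} {lo hi : ℝ}
    (hlo : ∀ a < lo, ∀ᶠ u in l, a ≤ ρ u) (hhi : ∀ B > hi, ∀ᶠ u in l, ρ u ≤ B) :
    lo ≤ liminf ρ l ∧ liminf ρ l ≤ limsup ρ l ∧ limsup ρ l ≤ hi := by
  have hbdd_above : IsBoundedUnder (· ≤ ·) l ρ :=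
    isBoundedUnder_of_eventually_le (hhi (hi + 1) (by linarith))
  have hbdd_below : IsBoundedUnder (· ≥ ·) l ρ :=
    isBoundedUnder_of_eventually_ge (hlo (lo - 1) (by linarith))
  exact ⟨le_of_forall_lt_imp_le_of_dense fun a ha =>
      le_liminf_of_le hbdd_above.isCoboundedUnder_ge (hlo a ha),
    liminf_le_limsup hbdd_above hbdd_below,
    le_of_forall_gt_imp_ge_of_dense fun B hB =>
      limsup_le_of_le hbdd_below.isCoboundedUnder_le (hhi B hB)⟩

lemma tendsto_sq_mul_exp_div_rpow_of_isLittleO_log {G : ℝ → ℝ} {c δ : ℝ}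
    (hG : G =o[atTop] log) (hc : 0 < c) (hδ : 0 < δ) :
    Tendsto (fun u => G u ^ 2 * exp (c * G u) / u ^ δ) atTop (𝓝 0) := by
  set k := δ / (2 * c) with hk
  have hlim : Tendsto (fun u => k ^ 2 * (log u ^ 2 / u ^ (δ / 2))) atTop (𝓝 0) := by
    simpa using ((isLittleO_log_rpow_rpow_atTop 2 (half_pos hδ)).tendsto_div_nhds_zero).const_mul
      (k ^ 2)
  refine squeeze_zero' ?_ ?_ hlim
  · filter_upwards [eventually_gt_atTop 0] with u hu
    positivity
  filter_upwards [hG.bound (by positivity : 0 < k), eventually_ge_atTop 1] with u hGu hu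
  have hu0 : 0 < u := by linarith
  rw [norm_eq_abs, norm_eq_abs, abs_of_nonneg (log_nonneg hu)] at hGu
  have hsq : G u ^ 2 ≤ (k * log u) ^ 2 := by
    rw [← sq_abs]
    exact pow_le_pow_left₀ (abs_nonneg _) hGu 2
  have hexp : exp (c * G u) ≤ u ^ (δ / 2) := by
    rw [rpow_def_of_pos hu0, exp_le_exp]
    calc c * G u ≤ c * (k * log u) := by gcongr; exact (le_abs_self _).trans hGu
      _ = log u * (δ / 2) := by rw [hk]; field_simp
  have hsplit : u ^ δ = u ^ (δ / 2) * u ^ (δ / 2) := by rw [← rpow_add hu0]; ring_nf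
  calc G u ^ 2 * exp (c * G u) / u ^ δ ≤ (k * log u) ^ 2 * u ^ (δ / 2) / u ^ δ := by gcongr
    _ = k ^ 2 * (log u ^ 2 / u ^ (δ / 2)) := by
      rw [hsplit]
      field_simp [(rpow_pos_of_pos hu0 (δ / 2)).ne']

lemma log_isBigO_log_of_rpow_le {y : ℝ → ℝ} {k p : ℝ} (hk : 0 < k) (hp : 0 ≤ p)
    (hy : ∀ᶠ u in atTop, (k / u) ^ p ≤ y u ∧ y u ≤ 1) :
    (fun u => log (y u)) =O[atTop] log := by
  refine IsBigO.of_bound (2 * p) ?_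
  filter_upwards [hy, eventually_gt_atTop 0, tendsto_log_atTop.eventually_ge_atTop |log k|]
    with u ⟨hlo, hhi⟩ hu hlogu
  have hpos : 0 < (k / u) ^ p := by positivity
  have hlow : p * (log k - log u) ≤ log (y u) := by
    rw [← log_div hk.ne' hu.ne', ← log_rpow (by positivity)]
    exact log_le_log hpos hlo
  have hlogk : p * -log k ≤ p * log u := by
    gcongr
    exact (neg_le_abs _).trans hlogu
  rw [norm_eq_abs, norm_eq_abs, abs_of_nonpos (log_nonpos (hpos.le.trans hlo) hhi),
    abs_of_nonneg ((abs_nonneg _).trans hlogu)]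
  nlinarith

lemma div_rpow_eq_mul_rpow_half {κ κ' u : ℝ} (hκ : 0 < κ) (hκ' : 0 < κ') (hu : 0 < u) (lam : ℝ) :
    (κ' / u) ^ (lam / 2) = (κ' / κ) ^ (lam / 2) * ((κ / u) ^ ((1 : ℝ) / 2)) ^ lam := by
  rw [← rpow_mul (by positivity), one_div_mul_eq_div, ← mul_rpow (by positivity) (by positivity)]
  congr 1
  field_simp

lemma tendsto_rpow_half_div_nhdsGT_zero {κ : ℝ} (hκ : 0 < κ) :
    Tendsto (fun u => (κ / u) ^ ((1 : ℝ) / 2)) atTop (𝓝[>] 0) := by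
  refine tendsto_nhdsWithin_iff.2 ⟨?_, ?_⟩
  · have h := (continuousAt_rpow_const 0 ((1 : ℝ) / 2) (Or.inr (by norm_num))).tendsto.comp
      (tendsto_const_nhds.div_atTop tendsto_id : Tendsto (fun u => κ / u) atTop (𝓝 0))
    rwa [zero_rpow (by norm_num)] at h
  · filter_upwards [eventually_gt_atTop 0] with u hu
    exact rpow_pos_of_pos (div_pos hκ hu) _

section RateCondition

variable {φ : ℝ → ℝ} {x₀ : ℝ}

/-- The rate condition only controls ratios known to be bounded above: for a function unbounded
above the real `limsup` is the junk value `0`. -/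
lemma eventually_div_le_of_monotoneOn_div_log (hφ : ∀ x > 0, 0 < φ x)
    (hanti : AntitoneOn φ (Ioi 0)) (hx₀ : 0 < x₀) (hx₀1 : x₀ < 1)
    (hmono : MonotoneOn (fun x => φ x / |log x|) (Ioc 0 x₀)) {c lam : ℝ} (hc : 0 < c)
    (hlam : 0 ≤ lam) :
    ∀ᶠ x in 𝓝[>] 0, φ (c * x ^ lam) / φ x ≤ lam + 1 := by
  filter_upwards [Ioo_mem_nhdsGT hx₀, tendsto_log_nhdsGT_zero.eventually
    (eventually_le_atBot (-|log c|))] with x ⟨hx, hxx₀⟩ hlogx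
  set y := c * x ^ lam
  have hy : 0 < y := by positivity
  rw [div_le_iff₀ (hφ x hx)]
  rcases le_or_gt x y with hxy | hyx
  · calc φ y ≤ φ x := hanti hx hy hxy
      _ ≤ (lam + 1) * φ x := le_mul_of_one_le_left (hφ x hx).le (by linarith)
  have hlogx0 : log x < 0 := log_neg hx (hxx₀.trans hx₀1)
  have hlogy0 : log y < 0 := log_neg hy (hyx.trans (hxx₀.trans hx₀1))
  have hdiv := hmono ⟨hy, hyx.le.trans hxx₀.le⟩ ⟨hx, hxx₀.le⟩ hyx.le
  simp only at hdiv
  rw [abs_of_neg hlogx0, abs_of_neg hlogy0, div_le_div_iff₀ (by linarith) (by linarith)] at hdiv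
  have hlogy : -log y ≤ (lam + 1) * -log x := by
    rw [log_mul hc.ne' (by positivity), log_rpow hx]
    linarith [neg_abs_le (log c)]
  refine le_of_mul_le_mul_right ?_ (neg_pos.2 hlogx0)
  calc φ y * -log x ≤ φ x * -log y := hdiv
    _ ≤ φ x * ((lam + 1) * -log x) := by gcongr; exact (hφ x hx).le
    _ = (lam + 1) * φ x * -log x := by ring

lemma eventually_div_lt_of_limsup_le (hφ : ∀ x > 0, 0 < φ x)
    (hanti : AntitoneOn φ (Ioi 0)) (hx₀ : 0 < x₀) (hx₀1 : x₀ < 1)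
    (hmono : MonotoneOn (fun x => φ x / |log x|) (Ioc 0 x₀)) {c lam L B : ℝ} (hc : 0 < c)
    (hlam : 0 ≤ lam) (hrate : limsup (fun x => φ (c * x ^ lam) / φ x) (𝓝[>] 0) ≤ L)
    (hB : L < B) :
    ∀ᶠ x in 𝓝[>] 0, φ (c * x ^ lam) / φ x < B :=
  eventually_lt_of_limsup_lt (hrate.trans_lt hB) (isBoundedUnder_of_eventually_le
    (eventually_div_le_of_monotoneOn_div_log hφ hanti hx₀ hx₀1 hmono hc hlam))

lemma eventually_lt_div_of_limsup_le (hφ : ∀ x > 0, 0 < φ x)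
    (hanti : AntitoneOn φ (Ioi 0)) (hx₀ : 0 < x₀) (hx₀1 : x₀ < 1)
    (hmono : MonotoneOn (fun x => φ x / |log x|) (Ioc 0 x₀)) {c a : ℝ} (hc : 0 < c)
    (hrate : limsup (fun x => φ (c⁻¹ * x ^ (1 : ℝ)) / φ x) (𝓝[>] 0) ≤ 1) (ha : a < 1) :
    ∀ᶠ x in 𝓝[>] 0, a < φ (c * x) / φ x := by
  rcases le_or_gt a 0 with ha0 | ha0
  · filter_upwards [self_mem_nhdsWithin] with x (hx : 0 < x)
    exact ha0.trans_lt (div_pos (hφ _ (by positivity)) (hφ x hx))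
  -- apply the rate condition with constant `c⁻¹` at the point `c * x`
  have hmul : Tendsto (fun x => c * x) (𝓝[>] 0) (𝓝[>] 0) := by
    refine tendsto_nhdsWithin_iff.2 ⟨?_, ?_⟩
    · simpa using (tendsto_nhdsWithin_of_tendsto_nhds (continuous_const_mul c).continuousAt.tendsto
        : Tendsto (fun x => c * x) (𝓝[>] 0) (𝓝 (c * 0)))
    · filter_upwards [self_mem_nhdsWithin] with x (hx : 0 < x)
      exact mul_pos hc hx
  filter_upwards [self_mem_nhdsWithin, hmul.eventually (eventually_div_lt_of_limsup_le hφ hanti hx₀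
    hx₀1 hmono (inv_pos.2 hc) zero_le_one hrate (one_lt_inv₀ ha0 |>.2 ha))] with x (hx : 0 < x) hlt
  rw [rpow_one, inv_mul_cancel_left₀ hc.ne', div_lt_iff₀ (hφ _ (by positivity))] at hlt
  rw [lt_div_iff₀ (hφ x hx)]
  calc a * φ x < a * (a⁻¹ * φ (c * x)) := by gcongr
    _ = φ (c * x) := by field_simp

lemma one_le_liminf_and_limsup_le_rpow_of_squeeze (hφ : ∀ x > 0, 0 < φ x)
    (hanti : AntitoneOn φ (Ioi 0)) (hx₀ : 0 < x₀) (hx₀1 : x₀ < 1)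
    (hmono : MonotoneOn (fun x => φ x / |log x|) (Ioc 0 x₀)) {ω Λ : ℝ}
    (hrate : ∀ c > 0, ∀ lam ≥ (1 : ℝ), limsup (fun x => φ (c * x ^ lam) / φ x) (𝓝[>] 0) ≤ lam ^ ω)
    (hΛ : 1 ≤ Λ) {ρ s : ℝ → ℝ} (hs : Tendsto s atTop (𝓝[>] 0))
    (hlow : ∃ c > 0, ∀ᶠ u in atTop, φ (c * s u) / φ (s u) ≤ ρ u)
    (hup : ∀ lam > Λ, ∃ c > 0, ∀ᶠ u in atTop, ρ u ≤ φ (c * s u ^ lam) / φ (s u)) :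
    1 ≤ liminf ρ atTop ∧ liminf ρ atTop ≤ limsup ρ atTop ∧ limsup ρ atTop ≤ Λ ^ ω := by
  refine le_liminf_and_limsup_le (fun a ha => ?_) (fun B hB => ?_)
  · obtain ⟨c, hc, hlow⟩ := hlow
    have hrate1 := hrate c⁻¹ (inv_pos.2 hc) 1 le_rfl
    rw [one_rpow] at hrate1
    filter_upwards [hlow, hs.eventually (eventually_lt_div_of_limsup_le hφ hanti hx₀ hx₀1 hmono hc
      hrate1 ha)] with u hle hlt
    exact hlt.le.trans hle
  · obtain ⟨lam, hlam, hlamB⟩ := ((continuousAt_rpow_const Λ ω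
      (Or.inl (by linarith))).eventually (gt_mem_nhds hB)).exists_gt
    obtain ⟨c, hc, hup⟩ := hup lam hlam
    filter_upwards [hup, hs.eventually (eventually_div_lt_of_limsup_le hφ hanti hx₀ hx₀1 hmono hc
      (by linarith) (hrate c hc lam (by linarith)) hlamB)] with u hle hlt
    exact hle.trans hlt.le

end RateCondition

section Inverse

variable {f finv : ℝ → ℝ}

lemma le_inv_iff_le_of_strictAntiOn (hf : StrictAntiOn f (Ioi 0))
    (hinv : InvOn finv f (Ioi 0) (Ioi 0)) (hmaps : MapsTo finv (Ioi 0) (Ioi 0)) {r x : ℝ}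
    (hr : 0 < r) (hx : 0 < x) : r ≤ finv x ↔ x ≤ f r := by
  rw [← hf.le_iff_ge (hmaps hx) hr, hinv.2 hx]

lemma inv_le_iff_le_of_strictAntiOn (hf : StrictAntiOn f (Ioi 0))
    (hinv : InvOn finv f (Ioi 0) (Ioi 0)) (hmaps : MapsTo finv (Ioi 0) (Ioi 0)) {r x : ℝ}
    (hr : 0 < r) (hx : 0 < x) : finv x ≤ r ↔ f r ≤ x := by
  rw [← hf.le_iff_ge hr (hmaps hx), hinv.2 hx]

lemma antitoneOn_comp_inv_of_strictAntiOn (hf : StrictAntiOn f (Ioi 0))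
    (hinv : InvOn finv f (Ioi 0) (Ioi 0)) (hmaps : MapsTo finv (Ioi 0) (Ioi 0)) {g : ℝ → ℝ}
    (hg : MonotoneOn g (Ici 0)) : AntitoneOn (fun x => g (finv x)) (Ioi 0) := by
  intro x hx y hy hxy
  have hx' : 0 < finv x := hmaps hx
  have hy' : 0 < finv y := hmaps hy
  refine hg hy'.le hx'.le ?_
  rw [inv_le_iff_le_of_strictAntiOn hf hinv hmaps (hmaps hx) hy, hinv.2 hx]
  exact hxy

lemma monotoneOn_comp_inv_div_log (hf : StrictAntiOn f (Ioi 0))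
    (hinv : InvOn finv f (Ioi 0) (Ioi 0)) (hmaps : MapsTo finv (Ioi 0) (Ioi 0)) {g : ℝ → ℝ}
    {R : ℝ} (hR : 0 < R) (hD : AntitoneOn (fun r => g r / |log (f r)|) (Ici R)) :
    MonotoneOn (fun x => g (finv x) / |log x|) (Ioc 0 (f R)) := by
  intro x ⟨hx, hxR⟩ y ⟨hy, hyR⟩ hxy
  have hle := hD ((le_inv_iff_le_of_strictAntiOn hf hinv hmaps hR hy).2 hyR)
    ((le_inv_iff_le_of_strictAntiOn hf hinv hmaps hR hx).2 hxR)
    ((inv_le_iff_le_of_strictAntiOn hf hinv hmaps (hmaps hx) hy).2 (by rwa [hinv.2 hx]))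
  simpa only [hinv.2 hx, hinv.2 hy] using hle

end Inverse

lemma tendsto_log_weight_div_abs_log {d : ℕ} (hd : 1 ≤ d) {f g η : ℝ → ℝ} {b c : ℝ}
    (hη : ∀ r ≥ 0, 0 < η r)
    (hb : Tendsto (fun r => (((d : ℝ) - 1) * log r + log (η r)) / |log (f r)|) atTop (𝓝 b))
    (hD : Tendsto (fun r => g r / |log (f r)|) atTop (𝓝 0)) :
    Tendsto (fun r => log (r ^ (d - 1) * η r * exp (c * g r)) / |log (f r)|) atTop (𝓝 b) := by
  have h := hb.add (hD.const_mul c)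
  rw [mul_zero, add_zero] at h
  refine h.congr' ?_
  filter_upwards [eventually_gt_atTop 0] with r hr
  rw [log_mul (mul_pos (pow_pos hr _) (hη r hr.le)).ne' (exp_pos _).ne',
    log_mul (pow_pos hr _).ne' (hη r hr.le).ne', log_exp,
    log_pow, Nat.cast_sub hd]
  push_cast
  ring

lemma eventually_one_le_weight {g η : ℝ → ℝ} {c : ℝ} (n : ℕ) (hη : ∀ r ≥ 0, 0 < η r)
    (hη_mono : MonotoneOn η (Ici 0)) (hc : 0 < c) (hg : Tendsto g atTop atTop) :
    ∀ᶠ r in atTop, 1 ≤ r ^ n * η r * exp (c * g r) := by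
  filter_upwards [eventually_ge_atTop 1, (tendsto_exp_atTop.comp
    (hg.const_mul_atTop hc)).eventually_ge_atTop (η 1)⁻¹] with r hr hexp
  have hη1 := hη 1 zero_le_one
  have hηr : η 1 ≤ η r := hη_mono (mem_Ici.2 zero_le_one) (mem_Ici.2 (by linarith)) hr
  calc (1 : ℝ) = 1 * η 1 * (η 1)⁻¹ := by field_simp
    _ ≤ r ^ n * η r * exp (c * g r) :=
      mul_le_mul (mul_le_mul (one_le_pow₀ hr) hηr hη1.le (by positivity)) hexp (by positivity)
        (mul_pos (by positivity) (hη1.trans_le hηr)).le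

lemma eventually_sq_le_H_le_rpow {d : ℕ} (hd : 1 ≤ d) {f g η H : ℝ → ℝ} {R b c : ℝ}
    (hf_pos : ∀ r > 0, 0 < f r) (hfR : ∀ r ≥ R, f r < 1) (hη : ∀ r ≥ 0, 0 < η r)
    (hη_mono : MonotoneOn η (Ici 0)) (hc : 0 < c) (hg : Tendsto g atTop atTop)
    (hb : Tendsto (fun r => (((d : ℝ) - 1) * log r + log (η r)) / |log (f r)|) atTop (𝓝 b))
    (hD : Tendsto (fun r => g r / |log (f r)|) atTop (𝓝 0))
    (hH : ∀ r, H r = f r ^ 2 * r ^ (d - 1) * η r * exp (c * g r)) {m : ℝ} (hm : m < 2 - b) :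
    ∀ᶠ r in atTop, f r ^ 2 ≤ H r ∧ H r ≤ f r ^ m := by
  filter_upwards [eventually_gt_atTop 0, eventually_ge_atTop R,
    eventually_one_le_weight (d - 1) hη hη_mono hc hg,
    (tendsto_log_weight_div_abs_log (c := c) hd hη hb hD).eventually_lt_const
      (by linarith : b < 2 - m)] with r hr hrR hP hlt
  have hf := hf_pos r hr
  have hlogf := log_neg hf (hfR r hrR)
  rw [div_lt_iff₀ (abs_pos.2 hlogf.ne), abs_of_neg hlogf] at hlt
  rw [hH, show f r ^ 2 * r ^ (d - 1) * η r * exp (c * g r)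
    = f r ^ 2 * (r ^ (d - 1) * η r * exp (c * g r)) by ring]
  refine ⟨le_mul_of_one_le_right (by positivity) hP, ?_⟩
  simpa only [sub_sub_cancel] using sq_mul_le_rpow_of_log_le hf (by linarith) hlt.le

lemma eventually_rpow_le_comp_le_rpow {f H γ : ℝ → ℝ} {u₀ κ' m : ℝ}
    (hf_pos : ∀ r > 0, 0 < f r) (hγ : ∀ u ≥ u₀, H (γ u) = κ' / u) (hγ_lim : Tendsto γ atTop atTop)
    (hκ' : 0 < κ') (hm : 0 < m) (hH : ∀ᶠ r in atTop, f r ^ 2 ≤ H r ∧ H r ≤ f r ^ m) :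
    ∀ᶠ u in atTop, (κ' / u) ^ m⁻¹ ≤ f (γ u) ∧ f (γ u) ≤ (κ' / u) ^ ((1 : ℝ) / 2) := by
  filter_upwards [hγ_lim.eventually hH, hγ_lim.eventually_gt_atTop 0, eventually_ge_atTop u₀,
    eventually_gt_atTop 0] with u ⟨hlow, hup⟩ hγ0 hu₀ hu
  rw [hγ u hu₀] at hlow hup
  have hf := (hf_pos _ hγ0).le
  refine ⟨(rpow_inv_le_iff_of_pos (by positivity) hf hm).2 hup, ?_⟩
  rw [one_div, le_rpow_inv_iff_of_pos hf (by positivity) two_pos, rpow_two]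
  exact hlow

lemma one_le_liminf_and_limsup_le_of_comp_bounds {f finv g γ α : ℝ → ℝ} {R b ω κ κ' : ℝ}
    (hf : StrictAntiOn f (Ioi 0)) (hinv : InvOn finv f (Ioi 0) (Ioi 0))
    (hmaps : MapsTo finv (Ioi 0) (Ioi 0)) (hf_pos : ∀ r > 0, 0 < f r)
    (hg_pos : ∀ r ≥ 0, 0 < g r) (hg_mono : MonotoneOn g (Ici 0))
    (hR : 0 < R) (hfR : ∀ r ≥ R, f r < 1)
    (hD : AntitoneOn (fun r => g r / |log (f r)|) (Ici R))
    (hrate : ∀ c > 0, ∀ lam ≥ (1 : ℝ),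
      limsup (fun s => g (finv (c * s ^ lam)) / g (finv s)) (𝓝[>] 0) ≤ lam ^ ω)
    (hκ : 0 < κ) (hκ' : 0 < κ') (hb : b ∈ Ico 0 2) (hγ_lim : Tendsto γ atTop atTop)
    (hγf : ∀ m ∈ Ioo 0 (2 - b), ∀ᶠ u in atTop,
      (κ' / u) ^ m⁻¹ ≤ f (γ u) ∧ f (γ u) ≤ (κ' / u) ^ ((1 : ℝ) / 2))
    (hα : ∀ u > 0, α u = finv ((κ / u) ^ ((1 : ℝ) / 2))) :
    1 ≤ liminf (fun u => g (γ u) / g (α u)) atTop ∧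
      liminf (fun u => g (γ u) / g (α u)) atTop ≤ limsup (fun u => g (γ u) / g (α u)) atTop ∧
      limsup (fun u => g (γ u) / g (α u)) atTop ≤ (2 / (2 - b)) ^ ω := by
  have hb' : 0 < 2 - b := by linarith [hb.2]
  have hinv_pos : ∀ x > 0, 0 < finv x := fun x hx => hmaps hx
  have hφ : ∀ x > 0, 0 < g (finv x) := fun x hx => hg_pos _ (hinv_pos x hx).le
  refine one_le_liminf_and_limsup_le_rpow_of_squeeze (φ := fun x => g (finv x)) hφ
    (antitoneOn_comp_inv_of_strictAntiOn hf hinv hmaps hg_mono) (hf_pos R hR) (hfR R le_rfl)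
    (monotoneOn_comp_inv_div_log hf hinv hmaps hR hD) hrate
    ((one_le_div hb').2 (by linarith [hb.1])) (tendsto_rpow_half_div_nhdsGT_zero hκ)
    ⟨(κ' / κ) ^ ((1 : ℝ) / 2), by positivity, ?_⟩ fun lam hlam => ⟨(κ' / κ) ^ (lam / 2),
      by positivity, ?_⟩
  · filter_upwards [hγf ((2 - b) / 2) ⟨by linarith, by linarith⟩, hγ_lim.eventually_gt_atTop 0,
      eventually_gt_atTop 0] with u ⟨_, hle⟩ hγ0 hu
    rw [div_rpow_eq_mul_rpow_half hκ hκ' hu, rpow_one] at hle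
    rw [hα u hu]
    gcongr
    · exact (hφ _ (by positivity)).le
    · exact hg_mono (hinv_pos _ (by positivity)).le hγ0.le
        ((inv_le_iff_le_of_strictAntiOn hf hinv hmaps hγ0 (by positivity)).2 hle)
  · have hlam0 : 0 < lam := (div_pos two_pos hb').trans hlam
    have hm : 2 / lam ∈ Ioo 0 (2 - b) :=
      ⟨div_pos two_pos hlam0, (div_lt_iff₀ hlam0).2 (by linarith [(div_lt_iff₀ hb').1 hlam])⟩
    filter_upwards [hγf _ hm, hγ_lim.eventually_gt_atTop 0, eventually_gt_atTop 0]
      with u ⟨hle, _⟩ hγ0 hu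
    rw [inv_div, div_rpow_eq_mul_rpow_half hκ hκ' hu] at hle
    rw [hα u hu]
    gcongr
    · exact (hφ _ (by positivity)).le
    · exact hg_mono hγ0.le (hinv_pos _ (by positivity)).le
        ((le_inv_iff_le_of_strictAntiOn hf hinv hmaps hγ0 (by positivity)).2 hle)

lemma isLittleO_comp_log_of_rpow_le {f g γ : ℝ → ℝ} {R κ' p : ℝ} (hf_pos : ∀ r > 0, 0 < f r)
    (hfR : ∀ r ≥ R, f r < 1) (hD : Tendsto (fun r => g r / |log (f r)|) atTop (𝓝 0))
    (hγ_lim : Tendsto γ atTop atTop) (hκ' : 0 < κ') (hp : 0 ≤ p)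
    (hγf : ∀ᶠ u in atTop, (κ' / u) ^ p ≤ f (γ u)) :
    (fun u => g (γ u)) =o[atTop] log := by
  have hg : g =o[atTop] fun r => log (f r) := by
    refine isLittleO_abs_right.1 ((isLittleO_iff_tendsto' ?_).2 hD)
    filter_upwards [eventually_ge_atTop R, eventually_gt_atTop 0] with r hrR hr h
    exact absurd h (abs_pos.2 (log_neg (hf_pos r hr) (hfR r hrR)).ne).ne'
  refine (hg.comp_tendsto hγ_lim).trans_isBigO (log_isBigO_log_of_rpow_le hκ' hp ?_)
  filter_upwards [hγf, hγ_lim.eventually_ge_atTop R] with u hlow hR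
  exact ⟨hlow, (hfR _ hR).le⟩

theorem stmt12_general
    (d : ℕ) (hd : 1 ≤ d)
    (f finv : ℝ → ℝ)
    (hf_anti : StrictAntiOn f (Set.Ioi 0))
    (hf_bij : Set.BijOn f (Set.Ioi 0) (Set.Ioi 0))
    (hf_inv : Set.InvOn finv f (Set.Ioi 0) (Set.Ioi 0))
    (g : ℝ → ℝ)
    (hg_pos : ∀ r ≥ 0, 0 < g r)
    (hg_mono : StrictMonoOn g (Set.Ici 0))
    (hg_lim : Tendsto g atTop atTop)
    -- Condition (D)
    (hD : ∃ R > 0, (∀ r ≥ R, f r < 1) ∧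
      AntitoneOn (fun r => g r / |Real.log (f r)|) (Set.Ici R) ∧
      Tendsto (fun r => g r / |Real.log (f r)|) atTop (𝓝 0))
    -- Rate condition on g with exponent ω
    (ω : ℝ)
    (hrate : ∀ c > 0, ∀ lam ≥ (1:ℝ),
      limsup (fun s => g (finv (c * s ^ lam)) / g (finv s)) (𝓝[>] (0:ℝ)) ≤ lam ^ ω)
    (K' t κ κ' : ℝ) (hK' : 0 < K') (ht : 0 < t) (hκ : 0 < κ) (hκ' : 0 < κ')
    (η : ℝ → ℝ)
    (hη_pos : ∀ r ≥ 0, 0 < η r)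
    (hη_mono : MonotoneOn η (Set.Ici 0))
    (b : ℝ) (hb : b ∈ Set.Ico (0:ℝ) 2)
    (hb_lim : Tendsto
      (fun r => (((d : ℝ) - 1) * Real.log r + Real.log (η r)) / |Real.log (f r)|)
      atTop (𝓝 b))
    (H : ℝ → ℝ)
    (hH : ∀ r, H r = f r ^ 2 * r ^ (d - 1) * η r * Real.exp (K' * t * g r))
    (u₀ : ℝ) (γ : ℝ → ℝ)
    (hγ : ∀ u ≥ u₀, H (γ u) = κ' / u)
    (hγ_lim : Tendsto γ atTop atTop)
    (α : ℝ → ℝ) (hα : ∀ u > 0, α u = finv ((κ / u) ^ ((1:ℝ) / 2))) :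
    (∀ ε ∈ Set.Ioo (0:ℝ) (2 - b), ∃ rε > 0, ∀ r > rε,
      f r ^ 2 ≤ H r ∧ H r ≤ f r ^ (2 - b - ε)) ∧
    (1 ≤ liminf (fun u => g (γ u) / g (α u)) atTop ∧
      liminf (fun u => g (γ u) / g (α u)) atTop ≤
        limsup (fun u => g (γ u) / g (α u)) atTop ∧
      limsup (fun u => g (γ u) / g (α u)) atTop ≤ (2 / (2 - b)) ^ ω) ∧
    (∀ δ > 0,
      Tendsto (fun u => g (γ u) ^ 2 * Real.exp (K' * t * g (γ u)) / u ^ δ) atTop (𝓝 0)) := by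
  obtain ⟨R, hR, hfR, hDanti, hDlim⟩ := hD
  have hf_pos : ∀ r > 0, 0 < f r := fun r hr => hf_bij.mapsTo hr
  have hmaps : MapsTo finv (Ioi 0) (Ioi 0) := (hf_bij.symm hf_inv.symm).mapsTo
  have hH_bounds : ∀ m < 2 - b, ∀ᶠ r in atTop, f r ^ 2 ≤ H r ∧ H r ≤ f r ^ m := fun m hm =>
    eventually_sq_le_H_le_rpow hd hf_pos hfR hη_pos hη_mono (mul_pos hK' ht) hg_lim hb_lim hDlim
      hH hm
  have hγf : ∀ m ∈ Ioo 0 (2 - b), ∀ᶠ u in atTop,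
      (κ' / u) ^ m⁻¹ ≤ f (γ u) ∧ f (γ u) ≤ (κ' / u) ^ ((1 : ℝ) / 2) := fun m hm =>
    eventually_rpow_le_comp_le_rpow hf_pos hγ hγ_lim hκ' hm.1 (hH_bounds m hm.2)
  refine ⟨fun ε hε => exists_pos_forall_gt_of_eventually (hH_bounds _ (by linarith [hε.1])),
    one_le_liminf_and_limsup_le_of_comp_bounds hf_anti hf_inv hmaps hf_pos hg_pos
      hg_mono.monotoneOn hR hfR hDanti hrate hκ hκ' hb hγ_lim hγf hα, fun δ hδ => ?_⟩
  have hm : (2 - b) / 2 ∈ Ioo 0 (2 - b) := ⟨by linarith [hb.2], by linarith [hb.2]⟩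
  have hgγ := isLittleO_comp_log_of_rpow_le hf_pos hfR hDlim hγ_lim hκ' (inv_pos.2 hm.1).le
    ((hγf _ hm).mono fun u h => h.1)
  simpa only [rpow_natCast] using
    tendsto_sq_mul_exp_div_rpow_of_isLittleO_log hgγ (mul_pos hK' ht) (Nat.cast_pos.2 hδ)

/-- With `H(r) = f(r)² r^{d−1} η(r) e^{K' t g(r)}` and `γ` the generalized
inverse along `H(γ(u)) = κ'/u`:
(i) for every `ε ∈ (0, 2−b)` eventually `f(r)² ≤ H(r) ≤ f(r)^{2−b−ε}`;
(ii) `1 ≤ liminf g(γ(u))/g(α(u)) ≤ limsup g(γ(u))/g(α(u)) ≤ (2/(2−b))^ω`;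
(iii) for every `δ > 0`, `g(γ(u))² e^{K' t g(γ(u))}/u^δ → 0`. -/
theorem stmt12
    (d : ℕ) (hd : 1 ≤ d)
    (f finv : ℝ → ℝ)
    (hf_pos : ∀ r > 0, 0 < f r)
    (hf_anti : StrictAntiOn f (Set.Ioi 0))
    (hf_cont : ContinuousOn f (Set.Ioi 0))
    (hf_bij : Set.BijOn f (Set.Ioi 0) (Set.Ioi 0))
    (hf_inv : Set.InvOn finv f (Set.Ioi 0) (Set.Ioi 0))
    (g : ℝ → ℝ)
    (hg_pos : ∀ r ≥ 0, 0 < g r)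
    (hg_mono : StrictMonoOn g (Set.Ici 0))
    (hg_cont : ContinuousOn g (Set.Ici 0))
    (hg_lim : Tendsto g atTop atTop)
    -- Condition (D)
    (hD : ∃ R > 0, (∀ r ≥ R, f r < 1) ∧
      AntitoneOn (fun r => g r / |Real.log (f r)|) (Set.Ici R) ∧
      Tendsto (fun r => g r / |Real.log (f r)|) atTop (𝓝 0))
    -- Rate condition on g with exponent ω
    (ω : ℝ) (hω : 0 ≤ ω)
    (hrate : ∀ c > 0, ∀ lam ≥ (1:ℝ),
      limsup (fun s => g (finv (c * s ^ lam)) / g (finv s)) (𝓝[>] (0:ℝ)) ≤ lam ^ ω)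
    (K' t κ κ' : ℝ) (hK' : 0 < K') (ht : 0 < t) (hκ : 0 < κ) (hκ' : 0 < κ')
    (η : ℝ → ℝ)
    (hη_pos : ∀ r ≥ 0, 0 < η r)
    (hη_mono : MonotoneOn η (Set.Ici 0))
    (hη_cont : ContinuousOn η (Set.Ici 0))
    (hη_int : MeasureTheory.IntegrableOn (fun r => (η r)⁻¹) (Set.Ici 1))
    (b : ℝ) (hb : b ∈ Set.Ico (0:ℝ) 2)
    (hb_anti : ∃ R : ℝ, AntitoneOn
      (fun r => (((d : ℝ) - 1) * Real.log r + Real.log (η r)) / |Real.log (f r)|)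
      (Set.Ici R))
    (hb_lim : Tendsto
      (fun r => (((d : ℝ) - 1) * Real.log r + Real.log (η r)) / |Real.log (f r)|)
      atTop (𝓝 b))
    (H : ℝ → ℝ)
    (hH : ∀ r, H r = f r ^ 2 * r ^ (d - 1) * η r * Real.exp (K' * t * g r))
    (u₀ : ℝ) (γ : ℝ → ℝ)
    (hγ : ∀ u ≥ u₀, H (γ u) = κ' / u)
    (hγ_lim : Tendsto γ atTop atTop)
    (α : ℝ → ℝ) (hα : ∀ u > 0, α u = finv ((κ / u) ^ ((1:ℝ) / 2))) :
    (∀ ε ∈ Set.Ioo (0:ℝ) (2 - b), ∃ rε > 0, ∀ r > rε,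
      f r ^ 2 ≤ H r ∧ H r ≤ f r ^ (2 - b - ε)) ∧
    (1 ≤ liminf (fun u => g (γ u) / g (α u)) atTop ∧
      liminf (fun u => g (γ u) / g (α u)) atTop ≤
        limsup (fun u => g (γ u) / g (α u)) atTop ∧
      limsup (fun u => g (γ u) / g (α u)) atTop ≤ (2 / (2 - b)) ^ ω) ∧
    (∀ δ > 0,
      Tendsto (fun u => g (γ u) ^ 2 * Real.exp (K' * t * g (γ u)) / u ^ δ) atTop (𝓝 0)) :=
  stmt12_general d hd f finv hf_anti hf_bij hf_inv g hg_pos hg_mono hg_lim hD ω hrate K' t κ κ' hK'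
    ht hκ hκ' η hη_pos hη_mono b hb hb_lim H hH u₀ γ hγ hγ_lim α hα
end

section
/- Let d ≥ 1 be an integer, a ∈ (0,1), m > 0, c_m := m^{1/(2a)}, and let f(r) := r^{−(d+2a+1)/2} e^{−c_m r} for r > 0 (a strictly decreasing continuous bijection of (0,∞) onto (0,∞), with inverse f⁻¹). Let θ > 0 and g(r) := (log r)^θ for r ≥ e. Then: (i) for every c > 0 and λ ≥ 1, lim_{s→0⁺} g(f⁻¹(c s^λ)) / g(f⁻¹(s)) = 1; (ii) for every κ > 0, setting α(u) := f⁻¹((κ/u)^{1/2}), one has lim_{u→∞} g(α(u)) / (log log u)^θ = 1. -/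
/-!
If `r = f⁻¹(s)` then `-log s = b log r + c r` with `b = (d + 2a + 1)/2` and `c = c_m`, and for
`r ≥ 1` this is squeezed between `c r` and `(b + c) r`. Hence `log f⁻¹(s) = log(-log s) + O(1)`,
so `log f⁻¹(s) ~ log(-log s)` as `s → 0⁺`. In both limits, `-log` of the argument of `f⁻¹` is an
affine function with positive slope of a quantity `ℓ → ∞` (`-log s`, resp. `log u`), so
`log f⁻¹(·) ~ log ℓ`, and `(log ·)^θ` respects asymptotic equivalence.
-/

open Filter Topology Set Real Asymptotics

theorem isEquivalent_of_sub_isBigO_one {α : Type*} {l : Filter α} {u v : α → ℝ}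
    (hv : Tendsto v l atTop) (h : (u - v) =O[l] fun _ => (1 : ℝ)) : u ~[l] v :=
  h.trans_isLittleO ((isLittleO_one_left_iff ℝ).2 (tendsto_norm_atTop_atTop.comp hv))

theorem isEquivalent_log_mul_add {α : Type*} {l : Filter α} {ℓ : α → ℝ} {p : ℝ} (q : ℝ)
    (hp : 0 < p) (hℓ : Tendsto ℓ l atTop) :
    (fun x => log (p * ℓ x + q)) ~[l] fun x => log (ℓ x) := by
  have hpℓ : Tendsto (fun x => p * ℓ x) l atTop := hℓ.const_mul_atTop hp
  have hlog_mul : (fun x => log (p * ℓ x)) ~[l] fun x => log (ℓ x) := by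
    refine (IsEquivalent.refl.const_add_of_norm_tendsto_atTop (c := log p)
      (tendsto_norm_atTop_atTop.comp (tendsto_log_atTop.comp hℓ))).congr_left ?_
    filter_upwards [hℓ.eventually_gt_atTop 0] with x hx
    rw [log_mul hp.ne' hx.ne']
    rfl
  exact ((IsEquivalent.refl.add_const_of_norm_tendsto_atTop
    (tendsto_norm_atTop_atTop.comp hpℓ)).log hpℓ).trans hlog_mul

theorem tendsto_rpow_div_rpow_of_isEquivalent {α : Type*} {l : Filter α} {u v : α → ℝ}
    (h : u ~[l] v) (hv : Tendsto v l atTop) (θ : ℝ) :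
    Tendsto (fun x => u x ^ θ / v x ^ θ) l (𝓝 1) := by
  have hv0 := hv.eventually_gt_atTop 0
  have hdiv : Tendsto (fun x => (u x / v x) ^ θ) l (𝓝 1) := by
    simpa using ((isEquivalent_iff_tendsto_one (hv0.mono fun _ hx => hx.ne')).1 h).rpow_const
      (p := θ) (Or.inl one_ne_zero)
  refine hdiv.congr' ?_
  filter_upwards [hv0, (h.symm.tendsto_atTop hv).eventually_gt_atTop 0] with x hvx hux
  exact div_rpow hux.le hvx.le θ

theorem abs_log_mul_log_add_mul_sub_log_le {b c r : ℝ} (hb : 0 ≤ b) (hc : 0 < c) (hr : 1 ≤ r) :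
    |log (b * log r + c * r) - log r| ≤ |log c| + |log (b + c)| := by
  have hr0 : 0 < r := by linarith
  have hlog0 : 0 ≤ log r := log_nonneg hr
  have hlow : c * r ≤ b * log r + c * r := by nlinarith
  have hup : b * log r + c * r ≤ (b + c) * r := by
    nlinarith [log_le_sub_one_of_pos hr0]
  have hcr : 0 < c * r := by positivity
  have hlog_low : log c + log r ≤ log (b * log r + c * r) := by
    rw [← log_mul hc.ne' hr0.ne']; exact log_le_log hcr hlow
  have hlog_up : log (b * log r + c * r) ≤ log (b + c) + log r := by
    rw [← log_mul (by linarith) hr0.ne']; exact log_le_log (by linarith) hup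
  rw [abs_le]
  constructor <;> linarith [neg_abs_le (log c), le_abs_self (log (b + c)), abs_nonneg (log c),
    abs_nonneg (log (b + c))]

section Equation

variable {α : Type*} {l : Filter α} {r L : α → ℝ} {b c : ℝ}

theorem tendsto_atTop_of_eq_mul_log_add_mul (hb : 0 ≤ b) (hc : 0 < c) (hL : Tendsto L l atTop)
    (hr : ∀ᶠ x in l, 0 < r x) (h : ∀ᶠ x in l, L x = b * log (r x) + c * r x) :
    Tendsto r l atTop := by
  refine tendsto_atTop_mono' l ?_ (hL.atTop_div_const (by linarith : 0 < b + c))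
  filter_upwards [hr, h] with x hrx hx
  rw [div_le_iff₀ (by linarith), hx]
  nlinarith [log_le_sub_one_of_pos hrx]

theorem isEquivalent_log_of_eq_mul_log_add_mul (hb : 0 ≤ b) (hc : 0 < c)
    (hL : Tendsto L l atTop) (hr : ∀ᶠ x in l, 0 < r x)
    (h : ∀ᶠ x in l, L x = b * log (r x) + c * r x) :
    (fun x => log (L x)) ~[l] fun x => log (r x) := by
  have hr_top := tendsto_atTop_of_eq_mul_log_add_mul hb hc hL hr h
  refine isEquivalent_of_sub_isBigO_one (tendsto_log_atTop.comp hr_top) ?_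
  refine IsBigO.of_bound (|log c| + |log (b + c)|) ?_
  filter_upwards [hr_top.eventually_ge_atTop 1, h] with x hx1 hx
  simpa [hx] using abs_log_mul_log_add_mul_sub_log_le hb hc hx1

end Equation

section Profile

variable {α : Type*} {l : Filter α} {b c : ℝ} {finv : ℝ → ℝ}

theorem tendsto_nhdsGT_zero_atTop_of_neg_log_eq (hb : 0 ≤ b) (hc : 0 < c)
    (hpos : MapsTo finv (Ioi 0) (Ioi 0))
    (heq : ∀ s > 0, -log s = b * log (finv s) + c * finv s) :
    Tendsto finv (𝓝[>] 0) atTop :=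
  tendsto_atTop_of_eq_mul_log_add_mul hb hc
    (tendsto_neg_atBot_atTop.comp tendsto_log_nhdsGT_zero)
    (eventually_mem_nhdsWithin.mono fun _ hs => hpos hs)
    (eventually_mem_nhdsWithin.mono fun s hs => heq s hs)

theorem isEquivalent_log_comp_of_neg_log_eq (hb : 0 ≤ b) (hc : 0 < c)
    (hpos : MapsTo finv (Ioi 0) (Ioi 0))
    (heq : ∀ s > 0, -log s = b * log (finv s) + c * finv s)
    {σ ℓ : α → ℝ} {p : ℝ} (q : ℝ) (hp : 0 < p)
    (hσ : Tendsto σ l (𝓝[>] 0)) (hℓ : Tendsto ℓ l atTop)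
    (hσℓ : ∀ᶠ x in l, -log (σ x) = p * ℓ x + q) :
    (fun x => log (finv (σ x))) ~[l] fun x => log (ℓ x) := by
  have hσ_pos : ∀ᶠ x in l, σ x ∈ Ioi 0 := hσ.eventually eventually_mem_nhdsWithin
  have hequiv := isEquivalent_log_of_eq_mul_log_add_mul hb hc
    ((tendsto_neg_atBot_atTop.comp tendsto_log_nhdsGT_zero).comp hσ)
    (hσ_pos.mono fun _ hx => hpos hx) (hσ_pos.mono fun x hx => heq (σ x) hx)
  refine hequiv.symm.trans ((isEquivalent_log_mul_add q hp hℓ).congr_left ?_)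
  filter_upwards [hσℓ] with x hx
  simp [hx]

end Profile

theorem neg_log_eq_of_rightInvOn {b c : ℝ} {f finv : ℝ → ℝ}
    (hf : ∀ r > 0, f r = r ^ (-b) * exp (-(c * r)))
    (hpos : MapsTo finv (Ioi 0) (Ioi 0)) (hinv : RightInvOn finv f (Ioi 0)) :
    ∀ s > 0, -log s = b * log (finv s) + c * finv s := by
  intro s hs
  have hr : 0 < finv s := hpos hs
  conv_lhs => rw [← hinv hs, hf _ hr]
  rw [log_mul (rpow_pos_of_pos hr _).ne' (exp_ne_zero _), log_rpow hr, log_exp]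
  ring

theorem tendsto_const_mul_rpow_nhdsGT_zero {c p : ℝ} (hc : 0 < c) (hp : 0 < p) :
    Tendsto (fun s : ℝ => c * s ^ p) (𝓝[>] 0) (𝓝[>] 0) := by
  refine tendsto_nhdsWithin_iff.2 ⟨?_, eventually_mem_nhdsWithin.mono fun s hs => ?_⟩
  · simpa [zero_rpow hp.ne'] using
      ((continuousAt_rpow_const 0 p (Or.inr hp.le)).tendsto.mono_left nhdsWithin_le_nhds).const_mul c
  · exact mul_pos hc (rpow_pos_of_pos hs p)

theorem tendsto_div_rpow_atTop_nhdsGT_zero {κ p : ℝ} (hκ : 0 < κ) (hp : 0 < p) :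
    Tendsto (fun u : ℝ => (κ / u) ^ p) atTop (𝓝[>] 0) := by
  have h : Tendsto (fun u : ℝ => κ / u) atTop (𝓝[>] 0) := by
    exact (tendsto_inv_atTop_nhdsGT_zero.comp (tendsto_id.atTop_div_const hκ)).congr fun u =>
      inv_div _ _
  exact ((tendsto_const_mul_rpow_nhdsGT_zero one_pos hp).comp h).congr fun u => one_mul _

theorem neg_log_const_mul_rpow {c s : ℝ} (p : ℝ) (hc : 0 < c) (hs : 0 < s) :
    -log (c * s ^ p) = p * -log s + -log c := by
  rw [log_mul hc.ne' (rpow_pos_of_pos hs p).ne', log_rpow hs]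
  ring

theorem neg_log_div_rpow {κ u : ℝ} (p : ℝ) (hκ : 0 < κ) (hu : 0 < u) :
    -log ((κ / u) ^ p) = p * log u + -(p * log κ) := by
  rw [log_rpow (div_pos hκ hu), log_div hκ.ne' hu.ne']
  ring

theorem stmt18_general
    (d : ℕ) (a m : ℝ) (ha : a ∈ Set.Ioo (0:ℝ) 1) (hm : 0 < m)
    (cm : ℝ) (hcm : cm = m ^ (1 / (2 * a)))
    (f finv g : ℝ → ℝ)
    (hf : ∀ r > 0, f r = r ^ (-(((d : ℝ) + 2 * a + 1) / 2)) * Real.exp (-(cm * r)))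
    (hf_bij : Set.BijOn f (Set.Ioi 0) (Set.Ioi 0))
    (hf_inv : Set.InvOn finv f (Set.Ioi 0) (Set.Ioi 0))
    (θ : ℝ)
    (hg : ∀ r ≥ Real.exp 1, g r = Real.log r ^ θ) :
    (∀ c > 0, ∀ lam ≥ (1:ℝ),
      Tendsto (fun s => g (finv (c * s ^ lam)) / g (finv s)) (𝓝[>] (0:ℝ)) (𝓝 1)) ∧
    (∀ κ > 0,
      Tendsto (fun u => g (finv ((κ / u) ^ ((1:ℝ) / 2))) / Real.log (Real.log u) ^ θ)
        atTop (𝓝 1)) := by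
  have hb : 0 ≤ ((d : ℝ) + 2 * a + 1) / 2 := by have := ha.1; positivity
  have hcm0 : 0 < cm := hcm ▸ rpow_pos_of_pos hm _
  have hpos : MapsTo finv (Ioi 0) (Ioi 0) := hf_inv.1.mapsTo hf_bij.surjOn
  have heq := neg_log_eq_of_rightInvOn hf hpos hf_inv.2
  have hneg_log : Tendsto (fun s => -log s) (𝓝[>] 0) atTop :=
    tendsto_neg_atBot_atTop.comp tendsto_log_nhdsGT_zero
  have hfinv := tendsto_nhdsGT_zero_atTop_of_neg_log_eq hb hcm0 hpos heq
  have hg_finv : ∀ᶠ s in 𝓝[>] 0, g (finv s) = log (finv s) ^ θ :=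
    (hfinv.eventually_ge_atTop (exp 1)).mono fun s hs => hg _ hs
  have hlog_finv : (fun s => log (finv s)) ~[𝓝[>] 0] fun s => log (-log s) :=
    isEquivalent_log_comp_of_neg_log_eq hb hcm0 hpos heq 0 one_pos tendsto_id hneg_log (by simp)
  refine ⟨fun c hc lam hlam => ?_, fun κ hκ => ?_⟩
  · have hσ := tendsto_const_mul_rpow_nhdsGT_zero hc (by linarith : 0 < lam)
    have hequiv := (isEquivalent_log_comp_of_neg_log_eq hb hcm0 hpos heq _ (by linarith) hσ
      hneg_log (eventually_mem_nhdsWithin.mono fun s hs => neg_log_const_mul_rpow lam hc hs)).trans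
      hlog_finv.symm
    refine (tendsto_rpow_div_rpow_of_isEquivalent hequiv (tendsto_log_atTop.comp hfinv) θ).congr' ?_
    filter_upwards [hσ.eventually hg_finv, hg_finv] with s hσs hs
    rw [hσs, hs]
  · have hσ := tendsto_div_rpow_atTop_nhdsGT_zero hκ (one_half_pos (α := ℝ))
    have hequiv := isEquivalent_log_comp_of_neg_log_eq hb hcm0 hpos heq _ one_half_pos hσ
      tendsto_log_atTop ((eventually_gt_atTop 0).mono fun u hu => neg_log_div_rpow _ hκ hu)
    refine (tendsto_rpow_div_rpow_of_isEquivalent hequiv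
      (tendsto_log_atTop.comp tendsto_log_atTop) θ).congr' ?_
    filter_upwards [hσ.eventually hg_finv] with u hu
    rw [hu]

/-- Relativistic profile `f(r) = r^{−(d+2a+1)/2} e^{−c_m r}` with
power-logarithmic potential profile `g(r) = (log r)^θ`:
(i) for every `c > 0` and `λ ≥ 1`, `g(f⁻¹(c s^λ))/g(f⁻¹(s)) → 1` as `s → 0⁺`;
(ii) for every `κ > 0`, with `α(u) = f⁻¹((κ/u)^{1/2})`,
`g(α(u)) / (log log u)^θ → 1` as `u → ∞`. -/
theorem stmt18
    (d : ℕ) (hd : 1 ≤ d) (a m : ℝ) (ha : a ∈ Set.Ioo (0:ℝ) 1) (hm : 0 < m)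
    (cm : ℝ) (hcm : cm = m ^ (1 / (2 * a)))
    (f finv g : ℝ → ℝ)
    (hf : ∀ r > 0, f r = r ^ (-(((d : ℝ) + 2 * a + 1) / 2)) * Real.exp (-(cm * r)))
    (hf_anti : StrictAntiOn f (Set.Ioi 0))
    (hf_cont : ContinuousOn f (Set.Ioi 0))
    (hf_bij : Set.BijOn f (Set.Ioi 0) (Set.Ioi 0))
    (hf_inv : Set.InvOn finv f (Set.Ioi 0) (Set.Ioi 0))
    (θ : ℝ) (hθ : 0 < θ)
    (hg : ∀ r ≥ Real.exp 1, g r = Real.log r ^ θ) :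
    (∀ c > 0, ∀ lam ≥ (1:ℝ),
      Tendsto (fun s => g (finv (c * s ^ lam)) / g (finv s)) (𝓝[>] (0:ℝ)) (𝓝 1)) ∧
    (∀ κ > 0,
      Tendsto (fun u => g (finv ((κ / u) ^ ((1:ℝ) / 2))) / Real.log (Real.log u) ^ θ)
        atTop (𝓝 1)) :=
  stmt18_general d a m ha hm cm hcm f finv g hf hf_bij hf_inv θ hg
end
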